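/- Let y : [0,∞) → [0,∞) be absolutely continuous and satisfy ẏ(t) ≤ a(t) + b(t)[y(t) + y(t)^α] for a.e. t > 0, where α ≥ 1 and a, b ∈ L^∞(0,∞). Assume also y ∈ L¹(0,∞), and set 𝖺 := ess sup_{t>0}|a(t)|, 𝖻 := ess sup_{t>0}|b(t)|, and M := 3 max{1, 2𝖺, 2𝖻}. Then there exists δ > 0 such that, if y(0) ≤ δ and ∫₀^∞ y(s) ds ≤ δ², then y(t) < Mδ for all t ∈ (0,∞). -/

import Mathlib

/-!
Take `δ = 1 / (2M)`, so that the threshold `Mδ` is `1/2`. If `y` reached `1/2`, let `t₀` be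
the first time it does. Below `1/2` we have `y + y^α ≤ 1`, hence `ẏ ≤ 𝖺 + 𝖻` before `t₀`.
Since `∫ y ≤ δ²`, the mean of `y` over `[t₀ - δ, t₀]` is at most `δ` (and if `t₀ ≤ δ` we start
from `y(0) ≤ δ`), so `y ≤ δ` at some `s ∈ [t₀ - δ, t₀]`, and then
`y(t₀) ≤ δ + δ(𝖺 + 𝖻) ≤ 1/6 + 1/6 < 1/2`.
-/

open MeasureTheory Set
open scoped ENNReal

theorem MeasureTheory.MemLp.ae_abs_le_essSup {α : Type*} {m : MeasurableSpace α}
    {μ : Measure α} {f : α → ℝ} (hf : MemLp f ∞ μ) :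
    ∀ᵐ x ∂μ, |f x| ≤ essSup (fun x => |f x|) μ :=
  ae_le_essSup ⟨_, ae_le_lpNorm_exponent_top hf⟩

theorem MeasureTheory.LocallyIntegrableOn.intervalIntegrable_of_Ici {f : ℝ → ℝ} {c a b : ℝ}
    (hf : LocallyIntegrableOn f (Ici c)) (ha : c ≤ a) (hb : c ≤ b) :
    IntervalIntegrable f volume a b :=
  (hf.integrableOn_compact_subset (fun _ hx => (le_min ha hb).trans hx.1) isCompact_uIcc)
    |>.intervalIntegrable

theorem continuousOn_Icc_of_sub_eq_integral {y y' : ℝ → ℝ} {a b : ℝ}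
    (hy' : IntervalIntegrable y' volume a b)
    (hy : ∀ x ∈ Icc a b, y x - y a = ∫ τ in a..x, y' τ) : ContinuousOn y (Icc a b) :=
  ((continuousOn_const (c := y a)).add
      ((intervalIntegral.continuousOn_primitive_interval' hy' left_mem_uIcc).mono
        Icc_subset_uIcc)).congr
    fun x hx => eq_add_of_sub_eq' (hy x hx)

theorem ContinuousOn.exists_first_le_of_le {α β : Type*} [ConditionallyCompleteLinearOrder α]
    [TopologicalSpace α] [OrderTopology α] [LinearOrder β] [TopologicalSpace β]
    [ClosedIciTopology β] {f : α → β} {a b : α} {c : β} (hf : ContinuousOn f (Icc a b))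
    (hab : a ≤ b) (hc : c ≤ f b) :
    ∃ t ∈ Icc a b, c ≤ f t ∧ ∀ x ∈ Ico a t, f x < c := by
  set S := Icc a b ∩ f ⁻¹' Ici c
  have hS : IsClosed S := hf.preimage_isClosed_of_isClosed isClosed_Icc isClosed_Ici
  have hSb : BddBelow S := ⟨a, fun x hx => hx.1.1⟩
  obtain ⟨hmem, hle⟩ := hS.csInf_mem ⟨b, ⟨⟨hab, le_rfl⟩, hc⟩⟩ hSb
  refine ⟨sInf S, hmem, hle, fun x hx => lt_of_not_ge fun hfx => ?_⟩
  exact (csInf_le hSb ⟨⟨hx.1, hx.2.le.trans hmem.2⟩, hfx⟩).not_gt hx.2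

theorem exists_mem_Icc_le_of_integral_le_sq {y : ℝ → ℝ} {δ t : ℝ} (hδ : 0 < δ)
    (ht : 0 ≤ t) (hy_nonneg : ∀ x, 0 ≤ x → 0 ≤ y x) (hy : IntegrableOn y (Ioi 0))
    (hy0 : y 0 ≤ δ) (hint : ∫ x in Ioi 0, y x ≤ δ ^ 2) : ∃ s ∈ Icc (max 0 (t - δ)) t, y s ≤ δ := by
  rcases le_or_gt t δ with htδ | hδt
  · exact ⟨0, ⟨(max_eq_left (by linarith)).le, ht⟩, hy0⟩
  have hsub : Ioc (t - δ) t ⊆ Ioi 0 := fun x hx => (sub_pos.2 hδt).trans hx.1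
  have hvol : volume.real (Ioc (t - δ) t) = δ := by
    rw [Real.volume_real_Ioc_of_le (by linarith), sub_sub_cancel]
  obtain ⟨s, hs, hys⟩ := exists_le_setAverage (by simp [hδ]) (by simp) (hy.mono_set hsub)
  refine ⟨s, ⟨max_le ((sub_pos.2 hδt).trans hs.1).le hs.1.le, hs.2⟩, hys.trans ?_⟩
  have hmono : ∫ x in Ioc (t - δ) t, y x ≤ ∫ x in Ioi 0, y x :=
    setIntegral_mono_set hy ((ae_restrict_iff' measurableSet_Ioi).2 (ae_of_all _ fun x hx =>
      hy_nonneg x hx.le)) hsub.eventuallyLE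
  rw [setAverage_eq, hvol, smul_eq_mul, inv_mul_le_iff₀ hδ]
  exact hmono.trans (hint.trans (sq δ).le)

theorem le_add_mul_of_sub_eq_integral {y y' : ℝ → ℝ} {s t K : ℝ} (hst : s ≤ t)
    (hy' : IntervalIntegrable y' volume s t) (hy : y t - y s = ∫ τ in s..t, y' τ)
    (hK : ∀ᵐ x, x ∈ Ioo s t → y' x ≤ K) : y t ≤ y s + K * (t - s) := by
  have h := intervalIntegral.integral_mono_ae_restrict hst hy' intervalIntegrable_const
    (ae_restrict_of_ae_eq_of_ae_restrict Ioo_ae_eq_Icc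
      ((ae_restrict_iff' measurableSet_Ioo).2 hK))
  rw [intervalIntegral.integral_const, smul_eq_mul] at h
  linarith

theorem add_mul_add_rpow_le {a b A B z α : ℝ} (ha : |a| ≤ A) (hb : |b| ≤ B) (hα : 1 ≤ α)
    (hz0 : 0 ≤ z) (hz : z ≤ 1 / 2) : a + b * (z + z ^ α) ≤ A + B := by
  have hw0 : 0 ≤ z + z ^ α := by positivity
  have hw1 : z + z ^ α ≤ 1 := by linarith [Real.rpow_le_self_of_le_one hz0 (by linarith) hα]
  calc a + b * (z + z ^ α) ≤ |a| + |b| * (z + z ^ α) :=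
        add_le_add (le_abs_self a) (mul_le_mul_of_nonneg_right (le_abs_self b) hw0)
    _ ≤ A + B * 1 := add_le_add ha (mul_le_mul hb hw1 hw0 ((abs_nonneg b).trans hb))
    _ = A + B := by rw [mul_one]

theorem lt_of_deriv_le_below_of_integral_le_sq {y y' : ℝ → ℝ} {c K δ : ℝ}
    (hy_nonneg : ∀ t, 0 ≤ t → 0 ≤ y t) (hy'_loc : LocallyIntegrableOn y' (Ici 0))
    (hFTC : ∀ s t, 0 ≤ s → s ≤ t → y t - y s = ∫ τ in s..t, y' τ)
    (hyL1 : IntegrableOn y (Ioi 0)) (hK : 0 ≤ K) (hδ : 0 < δ) (hc : δ + K * δ < c)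
    (hderiv : ∀ᵐ x ∂(volume.restrict (Ioi 0)), y x < c → y' x ≤ K)
    (hy0 : y 0 ≤ δ) (hint : ∫ x in Ioi 0, y x ≤ δ ^ 2) {t : ℝ} (ht : 0 ≤ t) : y t < c := by
  by_contra! hyt
  obtain ⟨t₀, ht₀, hyt₀, hlt⟩ := (continuousOn_Icc_of_sub_eq_integral
    (hy'_loc.intervalIntegrable_of_Ici le_rfl ht) fun x hx => hFTC 0 x le_rfl hx.1)
    |>.exists_first_le_of_le ht hyt
  obtain ⟨s, hs, hys⟩ := exists_mem_Icc_le_of_integral_le_sq hδ ht₀.1 hy_nonneg hyL1 hy0 hint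
  have hs0 : 0 ≤ s := (le_max_left _ _).trans hs.1
  have hderiv_Ioo : ∀ᵐ x, x ∈ Ioo s t₀ → y' x ≤ K := by
    filter_upwards [(ae_restrict_iff' measurableSet_Ioi).1 hderiv] with x hx hxs
    have hx0 : 0 < x := hs0.trans_lt hxs.1
    exact hx hx0 (hlt x ⟨hx0.le, hxs.2⟩)
  have hgrowth := le_add_mul_of_sub_eq_integral hs.2
    (hy'_loc.intervalIntegrable_of_Ici hs0 ht₀.1) (hFTC s t₀ hs0 hs.2) hderiv_Ioo
  have hstep : K * (t₀ - s) ≤ K * δ :=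
    mul_le_mul_of_nonneg_left (by linarith [le_max_right 0 (t₀ - δ), hs.1]) hK
  linarith

/-- Lemma `gronwa`: let `y : [0,∞) → [0,∞)` be absolutely continuous
(i.e. `y(t) − y(s) = ∫_s^t y'` for a locally integrable `y'`) with
`y'(t) ≤ a(t) + b(t)(y(t) + y(t)^α)` a.e., where `α ≥ 1` and `a, b ∈ L^∞(0,∞)`, and assume
`y ∈ L¹(0,∞)`.  With `𝖺 := ess sup |a|`, `𝖻 := ess sup |b|` and `M := 3 max{1, 2𝖺, 2𝖻}`,
there exists `δ > 0` such that if `y(0) ≤ δ` and `∫₀^∞ y ≤ δ²`, then `y(t) < Mδ` for all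
`t > 0`. -/
theorem statement9 (y y' a b : ℝ → ℝ) (α : ℝ) (hα : 1 ≤ α)
    (hy_nonneg : ∀ t : ℝ, 0 ≤ t → 0 ≤ y t)
    (hy'_loc : LocallyIntegrableOn y' (Set.Ici (0:ℝ)))
    (hFTC : ∀ s t : ℝ, 0 ≤ s → s ≤ t → y t - y s = ∫ τ in s..t, y' τ)
    (ha : MemLp a ∞ (volume.restrict (Set.Ioi (0:ℝ))))
    (hb : MemLp b ∞ (volume.restrict (Set.Ioi (0:ℝ))))
    (hineq : ∀ᵐ t ∂(volume.restrict (Set.Ioi (0:ℝ))), y' t ≤ a t + b t * (y t + y t ^ α))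
    (hyL1 : IntegrableOn y (Set.Ioi (0:ℝ))) :
    ∃ δ > (0:ℝ),
      y 0 ≤ δ → (∫ s in Set.Ioi (0:ℝ), y s) ≤ δ ^ 2 →
      ∀ t > (0:ℝ),
        y t < 3 * max 1 (max (2 * essSup (fun t => |a t|) (volume.restrict (Set.Ioi (0:ℝ))))
          (2 * essSup (fun t => |b t|) (volume.restrict (Set.Ioi (0:ℝ))))) * δ := by
  set μ := volume.restrict (Ioi (0:ℝ))
  set A := essSup (fun t => |a t|) μ
  set B := essSup (fun t => |b t|) μ
  set M := 3 * max 1 (max (2 * A) (2 * B))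
  have hM3 : 3 ≤ M := by simp only [M]; linarith [le_max_left 1 (max (2 * A) (2 * B))]
  have hMAB : A + B ≤ M / 3 := by
    simp only [M]; linarith [le_max_left (2 * A) (2 * B), le_max_right (2 * A) (2 * B),
      le_max_right 1 (max (2 * A) (2 * B))]
  have hderiv : ∀ᵐ x ∂μ, y x < 1 / 2 → y' x ≤ M / 3 := by
    filter_upwards [ae_restrict_mem measurableSet_Ioi, hineq, ha.ae_abs_le_essSup,
      hb.ae_abs_le_essSup] with x hx hineqx hax hbx hyx
    exact hineqx.trans <|
      (add_mul_add_rpow_le hax hbx hα (hy_nonneg x (le_of_lt hx)) hyx.le).trans hMAB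
  have hMδ : M * (1 / (2 * M)) = 1 / 2 := by field_simp
  have hδ6 : 1 / (2 * M) ≤ 1 / 6 := by gcongr; linarith
  refine ⟨1 / (2 * M), by positivity, fun hy0 hint t ht => hMδ ▸ ?_⟩
  exact lt_of_deriv_le_below_of_integral_le_sq hy_nonneg hy'_loc hFTC hyL1 (by linarith)
    (by positivity) (by linarith) hderiv hy0 hint ht.le
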